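/- arXiv:2007.10742 — 3 statements merged into one kernel-verified Lean document; each statement's English description precedes it below -/
import Mathlib

section
/- Let K = [a,b,c] and L = [b,c,d] be two non-degenerate triangles in ℝ² sharing the edge [b,c], lying on opposite sides of that edge, and let v ∈ ℝ². Define 𝟙ᵥ(x) = 1 if the segment [x, x+v] intersects the segment [b,c], and 0 otherwise. Then ∫_{ℝ²} 𝟙ᵥ(x) dx = |v| · |b - c| · |ν·v|/|v|, where ν is the unit vector orthogonal to b - c; i.e. the integral equals |b - c| · |ν · v|. -/
/-! The set is the translate by `b` of the parallelogram spanned by `c - b` and `-v`, whose area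
is `|ω (c - b) v|` for the area form `ω` of either orientation of the plane. Since `ν` is a unit
normal of `c - b`, the identity `⟪ν, x⟫ ω ν y - ω ν x ⟪ν, y⟫ = ‖ν‖² ω x y` gives
`|ω (c - b) v| = ‖c - b‖ |⟪ν, v⟫|`. -/

open RealInnerProductSpace MeasureTheory

theorem setOf_add_smul_mem_segment_eq_image_parallelepiped {E : Type*} [AddCommGroup E]
    [Module ℝ E] (b c v : E) :
    {x : E | ∃ t ∈ Set.Icc (0 : ℝ) 1, x + t • v ∈ segment ℝ b c} =
      (b + ·) '' parallelepiped ![c - b, -v] := by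
  ext x
  simp only [Set.mem_ofPred_eq, Set.mem_image, mem_parallelepiped_iff, segment_eq_image',
    Fin.sum_univ_two, Matrix.cons_val_zero, Matrix.cons_val_one]
  constructor
  · rintro ⟨t, ht, s, hs, hx⟩
    refine ⟨s • (c - b) + t • (-v), ⟨![s, t], ?_, by simp⟩, ?_⟩
    · constructor <;> intro i <;> fin_cases i <;> simp [ht.1, ht.2, hs.1, hs.2]
    · linear_combination (norm := module) hx
  · rintro ⟨y, ⟨t, ht, rfl⟩, rfl⟩
    exact ⟨t 1, ⟨ht.1 1, ht.2 1⟩, t 0, ⟨ht.1 0, ht.2 0⟩, by module⟩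

attribute [local instance] FiniteDimensional.of_fact_finrank_eq_two

namespace Orientation

variable {E : Type*} [NormedAddCommGroup E] [InnerProductSpace ℝ E]
  [Fact (Module.finrank ℝ E = 2)] (o : Orientation ℝ E (Fin 2))

theorem volume_parallelepiped_eq_abs_areaForm [MeasurableSpace E] [BorelSpace E] (x y : E) :
    volume (parallelepiped ![x, y]) = ENNReal.ofReal |o.areaForm x y| := by
  rw [← o.measure_eq_volume, AlternatingMap.measure_parallelepiped, o.areaForm_to_volumeForm]

theorem abs_areaForm_eq_norm_mul_abs_inner {ν w : E} (hν : ‖ν‖ = 1) (hperp : ⟪ν, w⟫ = 0)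
    (v : E) : |o.areaForm w v| = ‖w‖ * |⟪ν, v⟫| := by
  have hwv : o.areaForm w v = -(o.areaForm ν w * ⟪ν, v⟫) := by
    simpa [hperp, hν] using (o.inner_mul_areaForm_sub ν w v).symm
  rw [hwv, abs_neg, abs_mul, o.abs_areaForm_of_orthogonal hperp, hν, one_mul]

end Orientation

theorem volume_setOf_add_smul_mem_segment {E : Type*} [NormedAddCommGroup E]
    [InnerProductSpace ℝ E] [Fact (Module.finrank ℝ E = 2)] [MeasurableSpace E] [BorelSpace E]
    {ν : E} (hν : ‖ν‖ = 1) {b c : E} (hperp : ⟪ν, c - b⟫ = 0) (v : E) :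
    volume {x : E | ∃ t ∈ Set.Icc (0 : ℝ) 1, x + t • v ∈ segment ℝ b c} =
      ENNReal.ofReal (dist b c * |⟪ν, v⟫|) := by
  let o : Orientation ℝ E (Fin 2) := (Module.finBasisOfFinrankEq ℝ E Fact.out).orientation
  rw [setOf_add_smul_mem_segment_eq_image_parallelepiped, Set.image_add_left,
    measure_preimage_add, o.volume_parallelepiped_eq_abs_areaForm,
    o.abs_areaForm_eq_norm_mul_abs_inner hν hperp, inner_neg_right, abs_neg, dist_comm,
    dist_eq_norm]

theorem measure_segment_crossing_edge_general
    (b c v : EuclideanSpace ℝ (Fin 2))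
    (ν : EuclideanSpace ℝ (Fin 2)) (hν : ‖ν‖ = 1) (hperp : ⟪ν, c - b⟫ = 0) :
    volume {x : EuclideanSpace ℝ (Fin 2) |
        ∃ t ∈ Set.Icc (0 : ℝ) 1, x + t • v ∈ segment ℝ b c} =
      ENNReal.ofReal (dist b c * |⟪ν, v⟫|) :=
  have : Fact (Module.finrank ℝ (EuclideanSpace ℝ (Fin 2)) = 2) := ⟨finrank_euclideanSpace_fin⟩
  volume_setOf_add_smul_mem_segment hν hperp v

/-- Lemma 2.7 (i): for two nondegenerate triangles `K = [a,b,c]`, `L = [b,c,d]` in `ℝ²`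
sharing the edge `[b,c]` and lying on opposite sides of it, and `v ∈ ℝ²`, the Lebesgue
measure of the set `{x : [x, x+v] ∩ [b,c] ≠ ∅}` equals `|b - c| · |ν · v|`, where `ν` is
the unit vector orthogonal to `b - c`. -/
theorem measure_segment_crossing_edge
    (a b c d v : EuclideanSpace ℝ (Fin 2))
    (hK : ¬ Collinear ℝ ({a, b, c} : Set _))
    (hL : ¬ Collinear ℝ ({b, c, d} : Set _))
    (ν : EuclideanSpace ℝ (Fin 2)) (hν : ‖ν‖ = 1) (hperp : ⟪ν, c - b⟫ = 0)
    (hopp : ⟪a - b, ν⟫ * ⟪d - b, ν⟫ < 0) :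
    volume {x : EuclideanSpace ℝ (Fin 2) |
        ∃ t ∈ Set.Icc (0 : ℝ) 1, x + t • v ∈ segment ℝ b c} =
      ENNReal.ofReal (dist b c * |⟪ν, v⟫|) :=
  measure_segment_crossing_edge_general b c v ν hν hperp
end

section
/- Let a,b,c,d ∈ ℝ², w ∈ ℝ², and v ∈ ℝ². Set v̄ = (v, v·w) ∈ ℝ³ and similarly ā = (a, a·w), b̄, c̄, d̄ ∈ ℝ³. Let l̄ be the length of the segment [b̄, c̄] and θ̄ = |ν̄ · v̄|/|v̄| where ν̄ is the unit vector in the plane {(x, x·w) : x ∈ ℝ²} orthogonal to c̄ - b̄. If 𝟙ᵥ(x) = 1 exactly when [x,x+v] meets [b,c] in ℝ², then ∫_{ℝ²} 𝟙ᵥ(x) dx = (|v̄| / √(1+|w|²)) · θ̄ · l̄. -/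
open RealInnerProductSpace MeasureTheory

/-!
The set of `x` with `[x, x + v] ∩ [b, c] ≠ ∅` is the translate by `b` of the parallelogram
spanned by `e = c - b` and `-v`, of area `|e ∧ v|`. Pairing Cramer's identity
`(ν ∧ e) • v + (e ∧ v) • ν + (v ∧ ν) • e = 0` with `⟪ν̄, ·̄⟫` gives `(ν ∧ e) ⟪ν̄, v̄⟫ = -(e ∧ v)`,
and the Gram identity `‖x̄‖² ‖ȳ‖² - ⟪x̄, ȳ⟫² = (1 + |w|²) (x ∧ y)²` for `x = ν`, `y = e` gives
`‖ē‖² = (1 + |w|²) (ν ∧ e)²`. Hence `|⟪ν̄, v̄⟫| ‖ē‖ = √(1 + |w|²) |e ∧ v|`.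
-/

/-- The lift `x ↦ (x, x·w)` of the plane into `ℝ³`. -/
noncomputable def liftW (w x : EuclideanSpace ℝ (Fin 2)) : EuclideanSpace ℝ (Fin 3) :=
  (WithLp.equiv 2 (Fin 3 → ℝ)).symm ![x 0, x 1, ⟪x, w⟫]

theorem mem_parallelepiped_pair_iff {E : Type*} [AddCommGroup E] [Module ℝ E] (u v x : E) :
    x ∈ parallelepiped ![u, v] ↔
      ∃ s ∈ Set.Icc (0 : ℝ) 1, ∃ t ∈ Set.Icc (0 : ℝ) 1, x = s • u + t • v := by
  simp only [mem_parallelepiped_iff, Fin.sum_univ_two, Matrix.cons_val_zero,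
    Matrix.cons_val_one, Set.mem_Icc, Pi.le_def, Fin.forall_fin_two, Pi.zero_apply,
    Pi.one_apply]
  constructor
  · rintro ⟨t, ⟨⟨h0, h1⟩, h0', h1'⟩, rfl⟩
    exact ⟨t 0, ⟨h0, h0'⟩, t 1, ⟨h1, h1'⟩, rfl⟩
  · rintro ⟨s, hs, t, ht, rfl⟩
    exact ⟨![s, t], ⟨⟨hs.1, ht.1⟩, hs.2, ht.2⟩, rfl⟩

theorem setOf_exists_add_smul_mem_segment_eq_preimage_parallelepiped {E : Type*} [AddCommGroup E]
    [Module ℝ E] (b c v : E) :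
    {x : E | ∃ t ∈ Set.Icc (0 : ℝ) 1, x + t • v ∈ segment ℝ b c} =
      (fun x => -b + x) ⁻¹' parallelepiped ![c - b, -v] := by
  ext x
  simp only [Set.mem_ofPred_eq, Set.mem_preimage, mem_parallelepiped_pair_iff, segment_eq_image',
    Set.mem_image]
  constructor
  · rintro ⟨t, ht, s, hs, hx⟩
    refine ⟨s, hs, t, ht, ?_⟩
    linear_combination (norm := module) -hx
  · rintro ⟨s, hs, t, ht, hx⟩
    refine ⟨t, ht, s, hs, ?_⟩
    linear_combination (norm := module) -hx

def wedge (x y : EuclideanSpace ℝ (Fin 2)) : ℝ := x 0 * y 1 - x 1 * y 0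

theorem wedge_neg_right (x y : EuclideanSpace ℝ (Fin 2)) : wedge x (-y) = -wedge x y := by
  simp only [wedge, PiLp.neg_apply]; ring

theorem wedge_smul_add_wedge_smul_add_wedge_smul (x y z : EuclideanSpace ℝ (Fin 2)) :
    wedge y z • x + wedge z x • y + wedge x y • z = 0 := by
  ext i
  fin_cases i <;> simp [wedge] <;> ring

theorem volume_parallelepiped_pair (x y : EuclideanSpace ℝ (Fin 2)) :
    volume (parallelepiped ![x, y]) = ENNReal.ofReal |wedge x y| := by
  rw [← (EuclideanSpace.basisFun (Fin 2) ℝ).addHaar_eq_volume, Measure.addHaar_parallelepiped,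
    Module.Basis.det_apply, Matrix.det_fin_two]
  simp [Module.Basis.toMatrix_apply, wedge, mul_comm]

noncomputable def liftWₗ (w : EuclideanSpace ℝ (Fin 2)) :
    EuclideanSpace ℝ (Fin 2) →ₗ[ℝ] EuclideanSpace ℝ (Fin 3) where
  toFun := liftW w
  map_add' x y := by ext i; fin_cases i <;> simp [liftW, inner_add_left]
  map_smul' r x := by ext i; fin_cases i <;> simp [liftW, real_inner_smul_left]

theorem liftWₗ_apply (w x : EuclideanSpace ℝ (Fin 2)) : liftWₗ w x = liftW w x := rfl

theorem inner_liftW_liftW (w x y : EuclideanSpace ℝ (Fin 2)) :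
    ⟪liftW w x, liftW w y⟫ = x 0 * y 0 + x 1 * y 1 + ⟪x, w⟫ * ⟪y, w⟫ := by
  simp [liftW, PiLp.inner_apply, Fin.sum_univ_three]
  ring

theorem norm_liftW_sq_mul_norm_liftW_sq_sub_inner_sq (w x y : EuclideanSpace ℝ (Fin 2)) :
    ‖liftW w x‖ ^ 2 * ‖liftW w y‖ ^ 2 - ⟪liftW w x, liftW w y⟫ ^ 2 =
      (1 + ‖w‖ ^ 2) * wedge x y ^ 2 := by
  rw [← real_inner_self_eq_norm_sq, ← real_inner_self_eq_norm_sq, inner_liftW_liftW,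
    inner_liftW_liftW, inner_liftW_liftW]
  simp [EuclideanSpace.norm_sq_eq, PiLp.inner_apply, Fin.sum_univ_two, wedge]
  ring

theorem liftW_sub (w x y : EuclideanSpace ℝ (Fin 2)) :
    liftW w (x - y) = liftW w x - liftW w y :=
  map_sub (liftWₗ w) x y

theorem liftW_eq_zero_iff {w x : EuclideanSpace ℝ (Fin 2)} : liftW w x = 0 ↔ x = 0 := by
  refine ⟨fun h => ?_, fun h => h ▸ map_zero (liftWₗ w)⟩
  have h0 := congrArg (· 0) h
  have h1 := congrArg (· 1) h
  simp only [liftW] at h0 h1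
  ext i
  fin_cases i <;> simpa

theorem abs_inner_liftW_mul_norm_liftW_eq {w ν e : EuclideanSpace ℝ (Fin 2)}
    (hν : ‖liftW w ν‖ = 1) (hperp : ⟪liftW w ν, liftW w e⟫ = 0) (v : EuclideanSpace ℝ (Fin 2)) :
    |⟪liftW w ν, liftW w v⟫| * ‖liftW w e‖ = √(1 + ‖w‖ ^ 2) * |wedge e v| := by
  have hcramer : wedge ν e * ⟪liftW w ν, liftW w v⟫ = -wedge e v := by
    have h := congrArg (fun z => ⟪liftW w ν, liftWₗ w z⟫)
      (wedge_smul_add_wedge_smul_add_wedge_smul v ν e)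
    simp only [map_add, map_smul, inner_add_right, inner_smul_right, liftWₗ_apply, hperp,
      real_inner_self_eq_norm_sq, hν, map_zero, inner_zero_right] at h
    linarith
  have hgram : ‖liftW w e‖ ^ 2 = (1 + ‖w‖ ^ 2) * wedge ν e ^ 2 := by
    simpa [hν, hperp] using norm_liftW_sq_mul_norm_liftW_sq_sub_inner_sq w ν e
  rw [← sq_eq_sq₀ (by positivity) (by positivity), mul_pow, mul_pow, sq_abs, sq_abs, hgram,
    Real.sq_sqrt (by positivity), ← neg_sq (wedge e v), ← hcramer]
  ring

theorem measure_segment_crossing_edge_lifted_general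
    (b c v w : EuclideanSpace ℝ (Fin 2))
    (νbar : EuclideanSpace ℝ (Fin 3))
    (hplane : ∃ ν₀ : EuclideanSpace ℝ (Fin 2), νbar = liftW w ν₀)
    (hν : ‖νbar‖ = 1) (hperp : ⟪νbar, liftW w c - liftW w b⟫ = 0) :
    volume {x : EuclideanSpace ℝ (Fin 2) |
        ∃ t ∈ Set.Icc (0 : ℝ) 1, x + t • v ∈ segment ℝ b c} =
      ENNReal.ofReal
        (‖liftW w v‖ / Real.sqrt (1 + ‖w‖ ^ 2) *
          (|⟪νbar, liftW w v⟫| / ‖liftW w v‖) * dist (liftW w b) (liftW w c)) := by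
  obtain ⟨ν₀, rfl⟩ := hplane
  rw [setOf_exists_add_smul_mem_segment_eq_preimage_parallelepiped, measure_preimage_add,
    volume_parallelepiped_pair, wedge_neg_right, abs_neg, dist_comm, dist_eq_norm, ← liftW_sub]
  rw [← liftW_sub] at hperp
  congr 1
  rcases eq_or_ne v 0 with rfl | hv
  · simp [wedge, liftW_eq_zero_iff.mpr rfl]
  rw [div_mul_div_comm, mul_comm ‖liftW w v‖,
    mul_div_mul_right _ _ (norm_ne_zero_iff.mpr (liftW_eq_zero_iff.not.mpr hv)), div_mul_eq_mul_div,
    abs_inner_liftW_mul_norm_liftW_eq hν hperp, mul_div_cancel_left₀ _ (by positivity)]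

/-- Lemma 2.7 (ii): with `v̄ = (v, v·w)`, `b̄, c̄` the lifts of `b, c`,
`l̄ = |b̄ - c̄|`, and `θ̄ = |ν̄ · v̄| / |v̄|` for `ν̄` the unit vector in the plane
`{(x, x·w)}` orthogonal to `c̄ - b̄`, the Lebesgue measure of
`{x ∈ ℝ² : [x, x+v] ∩ [b,c] ≠ ∅}` equals `(|v̄| / √(1+|w|²)) · θ̄ · l̄`. -/
theorem measure_segment_crossing_edge_lifted
    (a b c d v w : EuclideanSpace ℝ (Fin 2)) (hv : v ≠ 0)
    (hK : ¬ Collinear ℝ ({a, b, c} : Set _))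
    (hL : ¬ Collinear ℝ ({b, c, d} : Set _))
    (νbar : EuclideanSpace ℝ (Fin 3))
    (hplane : ∃ ν₀ : EuclideanSpace ℝ (Fin 2), νbar = liftW w ν₀)
    (hν : ‖νbar‖ = 1) (hperp : ⟪νbar, liftW w c - liftW w b⟫ = 0) :
    volume {x : EuclideanSpace ℝ (Fin 2) |
        ∃ t ∈ Set.Icc (0 : ℝ) 1, x + t • v ∈ segment ℝ b c} =
      ENNReal.ofReal
        (‖liftW w v‖ / Real.sqrt (1 + ‖w‖ ^ 2) *
          (|⟪νbar, liftW w v⟫| / ‖liftW w v‖) * dist (liftW w b) (liftW w c)) :=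
  measure_segment_crossing_edge_lifted_general b c v w νbar hplane hν hperp
end

section
/- Let X ⊂ S² ⊂ ℝ³ be a finite set such that no four points of X are coplanar and every open hemisphere {x ∈ S² : x·n > 0} (n ∈ S²) contains a point of X. Then every face of the convex polytope conv(X) is a triangle K = [x,y,z] with x,y,z ∈ X, and for every such face with outward unit normal n(K), one has q(K) = |q(K)| n(K), where q(K) is the circumcenter of K; moreover the open circumball of K contains no point of X \ {x,y,z}. -/
/-!
The supporting plane `⟪·, n⟫ = t` of the face meets `S²` in a circle centred at `t • n`.
Three distinct points of a sphere are never collinear, so the normals to the plane of the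
face form a line, and the circumcenter `q`, orthogonal to that plane, is `t • n`. The
hemisphere `⟪·, n⟫ > 0` contains a point of `X`, which lies below the supporting plane, so
`t > 0` and `q = ‖q‖ • n`. For `p` on the sphere, `dist p q ^ 2 = 1 + t ^ 2 - 2 t ⟪p, n⟫`,
so points strictly below the plane are strictly farther from `q` than `x`; and a fourth
point of `X` on the plane would give four coplanar points.
-/

open RealInnerProductSpace Module

section

variable {E : Type*} [NormedAddCommGroup E] [InnerProductSpace ℝ E]

theorem mem_orthogonal_vectorSpan_of_inner_sub_eq_zero {s : Set E} {x v : E}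
    (h : ∀ p ∈ s, ⟪p - x, v⟫ = 0) : v ∈ (vectorSpan ℝ s)ᗮ := by
  suffices hle : vectorSpan ℝ s ≤ (ℝ ∙ v)ᗮ from
    (Submodule.mem_orthogonal _ v).2 fun u hu =>
      Submodule.mem_orthogonal_singleton_iff_inner_left.1 (hle hu)
  rw [vectorSpan_def, Submodule.span_le]
  rintro _ ⟨a, ha, b, hb, rfl⟩
  rw [SetLike.mem_coe, Submodule.mem_orthogonal_singleton_iff_inner_left]
  change ⟪a - b, v⟫ = 0
  rw [← sub_sub_sub_cancel_right a b x, inner_sub_left, h a ha, h b hb, sub_zero]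

theorem mem_orthogonal_vectorSpan_of_dist_eq {s : Set E} {x q : E}
    (hs : ∀ p ∈ s, ‖p‖ = ‖x‖) (hq : ∀ p ∈ s, dist p q = dist x q) :
    q ∈ (vectorSpan ℝ s)ᗮ :=
  mem_orthogonal_vectorSpan_of_inner_sub_eq_zero fun p hp => by
    simpa [real_inner_comm] using
      EuclideanGeometry.inner_vsub_vsub_of_dist_eq_of_dist_eq (c₁ := 0) (c₂ := q)
        (by simp [hs p hp]) (hq p hp).symm

theorem dist_lt_dist_of_norm_eq_of_inner_lt {p x q : E} (hp : ‖p‖ = ‖x‖)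
    (h : ⟪p, q⟫ < ⟪x, q⟫) : dist x q < dist p q := by
  rw [dist_eq_norm, dist_eq_norm]
  refine lt_of_pow_lt_pow_left₀ 2 (norm_nonneg _) ?_
  rw [norm_sub_sq_real, norm_sub_sq_real, hp]
  linarith

variable [FiniteDimensional ℝ E]

theorem one_le_finrank_orthogonal {K : Submodule ℝ E} {n : E} (hn : n ≠ 0) (hnK : n ∈ Kᗮ) :
    1 ≤ finrank ℝ Kᗮ :=
  Submodule.one_le_finrank_iff.2 ((Submodule.ne_bot_iff _).2 ⟨n, hnK, hn⟩)

theorem coplanar_of_mem_orthogonal_vectorSpan (hE : finrank ℝ E = 3) {s : Set E} {n : E}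
    (hn : n ≠ 0) (hns : n ∈ (vectorSpan ℝ s)ᗮ) : Coplanar ℝ s := by
  have := one_le_finrank_orthogonal hn hns
  have := (vectorSpan ℝ s).finrank_add_finrank_orthogonal
  rw [coplanar_iff_finrank_le_two]
  omega

theorem exists_smul_eq_of_mem_orthogonal_vectorSpan (hE : finrank ℝ E = 3) {s : Set E}
    (hs : ¬ Collinear ℝ s) {n v : E} (hn : n ≠ 0) (hns : n ∈ (vectorSpan ℝ s)ᗮ)
    (hvs : v ∈ (vectorSpan ℝ s)ᗮ) : ∃ c : ℝ, c • n = v := by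
  have := one_le_finrank_orthogonal hn hns
  have := (vectorSpan ℝ s).finrank_add_finrank_orthogonal
  rw [collinear_iff_finrank_le_one] at hs
  have hrank : finrank ℝ (vectorSpan ℝ s)ᗮ = 1 := by omega
  obtain ⟨c, hc⟩ := (finrank_eq_one_iff_of_nonzero' (⟨n, hns⟩ : (vectorSpan ℝ s)ᗮ)
    (by simpa using hn)).1 hrank ⟨v, hvs⟩
  exact ⟨c, congrArg Subtype.val hc⟩

end

theorem sphere_convex_hull_delaunay_general
    (X : Set (EuclideanSpace ℝ (Fin 3)))
    (hXsph : ∀ p ∈ X, ‖p‖ = 1)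
    (hnocoplanar : ∀ p₁ ∈ X, ∀ p₂ ∈ X, ∀ p₃ ∈ X, ∀ p₄ ∈ X,
      p₁ ≠ p₂ → p₁ ≠ p₃ → p₁ ≠ p₄ → p₂ ≠ p₃ → p₂ ≠ p₄ → p₃ ≠ p₄ →
      ¬ Coplanar ℝ ({p₁, p₂, p₃, p₄} : Set _))
    (hhemi : ∀ n : EuclideanSpace ℝ (Fin 3), ‖n‖ = 1 → ∃ p ∈ X, ⟪p, n⟫ > 0)
    -- a face of `conv(X)`: three points of `X` on a supporting plane with outward
    -- unit normal `n`
    (x y z : EuclideanSpace ℝ (Fin 3)) (hx : x ∈ X) (hy : y ∈ X) (hz : z ∈ X)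
    (hxy : x ≠ y) (hxz : x ≠ z) (hyz : y ≠ z)
    (n : EuclideanSpace ℝ (Fin 3)) (hn : ‖n‖ = 1)
    (hny : ⟪n, y - x⟫ = 0) (hnz : ⟪n, z - x⟫ = 0)
    (hsupp : ∀ p ∈ X, ⟪p - x, n⟫ ≤ 0)
    -- `q` is the circumcenter of the face `[x,y,z]`
    (q : EuclideanSpace ℝ (Fin 3))
    (hq₁ : dist q x = dist q y) (hq₂ : dist q x = dist q z) (hq₃ : ⟪q - x, n⟫ = 0) :
    (∀ p ∈ X, ⟪p - x, n⟫ = 0 → p = x ∨ p = y ∨ p = z) ∧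
      q = ‖q‖ • n ∧
      (∀ p ∈ X, p ≠ x → p ≠ y → p ≠ z → dist p q > dist x q) := by
  have hE : finrank ℝ (EuclideanSpace ℝ (Fin 3)) = 3 := finrank_euclideanSpace_fin
  have hn0 : n ≠ 0 := by rintro rfl; simp at hn
  have hface : ∀ p ∈ X, ⟪p - x, n⟫ = 0 → p = x ∨ p = y ∨ p = z := by
    intro p hp hpn
    by_contra! ⟨hpx, hpy, hpz⟩
    refine hnocoplanar x hx y hy z hz p hp hxy hxz hpx.symm hyz hpy.symm hpz.symm
      (coplanar_of_mem_orthogonal_vectorSpan hE hn0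
        (mem_orthogonal_vectorSpan_of_inner_sub_eq_zero (x := x) ?_))
    rintro _ (rfl | rfl | rfl | rfl) <;> simp_all [real_inner_comm]
  have hnK : n ∈ (vectorSpan ℝ {x, y, z})ᗮ :=
    mem_orthogonal_vectorSpan_of_inner_sub_eq_zero (x := x) (by
      rintro _ (rfl | rfl | rfl) <;> simp_all [real_inner_comm])
  have hqK : q ∈ (vectorSpan ℝ {x, y, z})ᗮ :=
    mem_orthogonal_vectorSpan_of_dist_eq (x := x)
      (by rintro _ (rfl | rfl | rfl) <;> simp_all)
      (by rintro _ (rfl | rfl | rfl) <;> simp_all [dist_comm])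
  have hxyz : ¬ Collinear ℝ {x, y, z} :=
    affineIndependent_iff_not_collinear_set.1
      (EuclideanGeometry.Cospherical.affineIndependent_of_ne
        ⟨0, 1, by rintro _ (rfl | rfl | rfl) <;> simp_all⟩ hxy hxz hyz)
  obtain ⟨c, rfl⟩ := exists_smul_eq_of_mem_orthogonal_vectorSpan hE hxyz hn0 hnK hqK
  have hc : c = ⟪x, n⟫ := by
    rw [inner_sub_left, real_inner_smul_left, real_inner_self_eq_norm_sq, hn] at hq₃
    linarith
  have hc_pos : 0 < c := by
    obtain ⟨p, hp, hpn⟩ := hhemi n hn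
    have := hsupp p hp
    rw [inner_sub_left] at this
    linarith
  refine ⟨hface, by rw [norm_smul, hn, Real.norm_of_nonneg hc_pos.le, mul_one], ?_⟩
  intro p hp hpx hpy hpz
  have hbelow : ⟪p - x, n⟫ < 0 := (hsupp p hp).lt_of_ne fun h => by
    rcases hface p hp h with rfl | rfl | rfl <;> contradiction
  refine dist_lt_dist_of_norm_eq_of_inner_lt (by rw [hXsph p hp, hXsph x hx]) ?_
  rw [inner_sub_left] at hbelow
  rw [real_inner_smul_right, real_inner_smul_right]
  exact mul_lt_mul_of_pos_left (by linarith) hc_pos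

/-- Delaunay triangulation of the sphere via the convex hull: let `X ⊂ S²` be finite with
no four points coplanar, such that every open hemisphere contains a point of `X`. Then
every face of `conv(X)` (given by points `x,y,z ∈ X` on a supporting plane with outward
unit normal `n`) is a triangle (no fourth point of `X` lies on the supporting plane), its
circumcenter `q` satisfies `q = |q| n`, and no point of `X \ {x,y,z}` lies in the open
circumball of the face. -/
theorem sphere_convex_hull_delaunay
    (X : Set (EuclideanSpace ℝ (Fin 3))) (hXfin : X.Finite)
    (hXsph : ∀ p ∈ X, ‖p‖ = 1)
    (hnocoplanar : ∀ p₁ ∈ X, ∀ p₂ ∈ X, ∀ p₃ ∈ X, ∀ p₄ ∈ X,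
      p₁ ≠ p₂ → p₁ ≠ p₃ → p₁ ≠ p₄ → p₂ ≠ p₃ → p₂ ≠ p₄ → p₃ ≠ p₄ →
      ¬ Coplanar ℝ ({p₁, p₂, p₃, p₄} : Set _))
    (hhemi : ∀ n : EuclideanSpace ℝ (Fin 3), ‖n‖ = 1 → ∃ p ∈ X, ⟪p, n⟫ > 0)
    -- a face of `conv(X)`: three points of `X` on a supporting plane with outward
    -- unit normal `n`
    (x y z : EuclideanSpace ℝ (Fin 3)) (hx : x ∈ X) (hy : y ∈ X) (hz : z ∈ X)
    (hxy : x ≠ y) (hxz : x ≠ z) (hyz : y ≠ z)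
    (n : EuclideanSpace ℝ (Fin 3)) (hn : ‖n‖ = 1)
    (hny : ⟪n, y - x⟫ = 0) (hnz : ⟪n, z - x⟫ = 0)
    (hsupp : ∀ p ∈ X, ⟪p - x, n⟫ ≤ 0)
    -- `q` is the circumcenter of the face `[x,y,z]`
    (q : EuclideanSpace ℝ (Fin 3))
    (hq₁ : dist q x = dist q y) (hq₂ : dist q x = dist q z) (hq₃ : ⟪q - x, n⟫ = 0) :
    (∀ p ∈ X, ⟪p - x, n⟫ = 0 → p = x ∨ p = y ∨ p = z) ∧
      q = ‖q‖ • n ∧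
      (∀ p ∈ X, p ≠ x → p ≠ y → p ≠ z → dist p q > dist x q) :=
  sphere_convex_hull_delaunay_general X hXsph hnocoplanar hhemi x y z hx hy hz hxy hxz hyz n hn hny
    hnz hsupp q hq₁ hq₂ hq₃
end
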